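/- arXiv:2407.19864 — 4 statements merged into one kernel-verified Lean document; each statement's English description precedes it below -/
import Mathlib

section
/- For the Newton basis generated by distinct points x_1,…,x_n, the kernel matrix admits the factorization K(x_i,x_j) = Σ_{m=1}^{min(i,j)} N_m(x_i) N_m(x_j) for all 1 ≤ i,j ≤ n; i.e., the lower triangular matrix L with entries L_{im} = N_m(x_i) for m ≤ i (and 0 otherwise) gives a Cholesky factorization K = L Lᵀ of the kernel matrix. -/
/-!
Each `K_{j+1}` is the Schur complement of `K_j` at the pivot `x_j`. A Schur complement of a
symmetric form that is positive definite on `{x_j, …, x_n}` is again symmetric and positive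
definite on `{x_{j+1}, …, x_n}`, so every pivot `K_j(x_j, x_j)` is positive. Unrolling the
recursion gives `K = ∑_{m ≤ t} N_m ⊗ N_m + K_{t+1}`, and `K_{t+1}(x_i, ·) = 0` for `i ≤ t`,
because a Schur complement vanishes on its pivot row and keeps every row that already vanishes.
-/

open Finset

section Kernel

variable {ι α : Type*}

def quadForm (κ : ι → ι → ℝ) (s : Finset ι) (c : ι → ℝ) : ℝ :=
  ∑ a ∈ s, ∑ b ∈ s, c a * c b * κ a b

def PosDefOn (κ : ι → ι → ℝ) (s : Finset ι) : Prop :=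
  ∀ c : ι → ℝ, (∃ a ∈ s, c a ≠ 0) → 0 < quadForm κ s c

noncomputable def schurComplement (k : α → α → ℝ) (p : α) : α → α → ℝ :=
  fun a b => k a b - k a p * k p b / k p p

theorem PosDefOn.diag_pos [DecidableEq ι] {κ : ι → ι → ℝ} {s : Finset ι} (h : PosDefOn κ s)
    {a : ι} (ha : a ∈ s) : 0 < κ a a := by
  simpa [quadForm, ite_mul, mul_ite, ha] using h (fun b => if b = a then 1 else 0) ⟨a, ha, by simp⟩

theorem quadForm_insert [DecidableEq ι] {κ : ι → ι → ℝ} {s : Finset ι} {i : ι} (hi : i ∉ s)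
    (c : ι → ℝ) :
    quadForm κ (insert i s) c = c i * c i * κ i i + c i * ∑ b ∈ s, c b * κ i b
      + c i * ∑ a ∈ s, c a * κ a i + quadForm κ s c := by
  simp only [quadForm, sum_insert hi, sum_add_distrib, mul_sum]
  ring_nf

theorem quadForm_congr {κ : ι → ι → ℝ} {s : Finset ι} {c c' : ι → ℝ}
    (h : ∀ a ∈ s, c a = c' a) : quadForm κ s c = quadForm κ s c' :=
  sum_congr rfl fun a ha => sum_congr rfl fun b hb => by rw [h a ha, h b hb]

theorem quadForm_schurComplement {κ : ι → ι → ℝ} (hκ : ∀ a b, κ a b = κ b a)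
    (s : Finset ι) (i : ι) (c : ι → ℝ) :
    quadForm (schurComplement κ i) s c
      = quadForm κ s c - (∑ b ∈ s, c b * κ i b) ^ 2 / κ i i := by
  have hcross : (∑ b ∈ s, c b * κ i b) ^ 2 / κ i i
      = ∑ a ∈ s, ∑ b ∈ s, c a * c b * (κ a i * κ i b / κ i i) := by
    rw [sq, sum_mul_sum, sum_div]
    refine sum_congr rfl fun a _ => ?_
    rw [sum_div]
    refine sum_congr rfl fun b _ => ?_
    rw [hκ i a]
    ring
  simp only [quadForm, schurComplement, hcross, ← sum_sub_distrib, mul_sub]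

theorem schurComplement_symm {k : α → α → ℝ} (hk : ∀ a b, k a b = k b a) (p : α) (a b : α) :
    schurComplement k p a b = schurComplement k p b a := by
  simp only [schurComplement, hk a b, hk a p, hk p b]
  ring

theorem schurComplement_pivot_left {k : α → α → ℝ} {p : α} (hp : k p p ≠ 0) (b : α) :
    schurComplement k p p b = 0 := by
  rw [schurComplement, mul_div_cancel_left₀ _ hp, sub_self]

theorem schurComplement_eq_zero_of_left {k : α → α → ℝ} {a : α} (ha : ∀ b, k a b = 0)
    (p b : α) : schurComplement k p a b = 0 := by
  simp [schurComplement, ha]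

/-- The Schur complement form at `c` is the minimum over the `i`-th coordinate of the original
form, attained at `-(∑ b ∈ s, c b * κ i b) / κ i i`. -/
theorem PosDefOn.schurComplement [DecidableEq ι] {κ : ι → ι → ℝ} (hκ : ∀ a b, κ a b = κ b a)
    {s : Finset ι} {i : ι} (hi : i ∉ s) (h : PosDefOn κ (insert i s)) :
    PosDefOn (schurComplement κ i) s := by
  intro c ⟨a, ha, hca⟩
  set t := ∑ b ∈ s, c b * κ i b
  have hd : 0 < κ i i := h.diag_pos (mem_insert_self i s)
  have hagree : ∀ b ∈ s, Function.update c i (-t / κ i i) b = c b := fun b hb =>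
    Function.update_of_ne (ne_of_mem_of_not_mem hb hi) _ _
  have hpos := h (Function.update c i (-t / κ i i))
    ⟨a, mem_insert_of_mem ha, by rwa [hagree a ha]⟩
  have hsum : ∀ f : ι → ℝ, ∑ b ∈ s, Function.update c i (-t / κ i i) b * f b
      = ∑ b ∈ s, c b * f b := fun f => sum_congr rfl fun b hb => by rw [hagree b hb]
  rw [quadForm_insert hi, hsum, hsum, quadForm_congr hagree, Function.update_self] at hpos
  rw [quadForm_schurComplement hκ]
  have ht : ∑ b ∈ s, c b * κ b i = t := sum_congr rfl fun b _ => by rw [hκ]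
  rw [ht] at hpos
  convert hpos using 1
  field_simp
  ring

theorem newton_mul_newton {k : α → α → ℝ} (hk : ∀ a b, k a b = k b a) {p : α} (hp : 0 < k p p)
    (a b : α) : k a p / √(k p p) * (k b p / √(k p p)) = k a p * k p b / k p p := by
  rw [div_mul_div_comm, Real.mul_self_sqrt hp.le, hk b p]

end Kernel

theorem sum_Icc_one_eq_sum_fin {M : Type*} [AddCommMonoid M] (f : ℕ → M) (n : ℕ) :
    ∑ i ∈ Icc 1 n, f i = ∑ i : Fin n, f (i + 1) := by
  rw [Fin.sum_univ_eq_sum_range (fun i => f (i + 1)), range_eq_Ico, sum_Ico_add', zero_add,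
    Ico_add_one_right_eq_Icc]

theorem PosDefOn.Icc_one_of_posDef {κ : ℕ → ℕ → ℝ} {n : ℕ}
    (h : (Matrix.of fun i j : Fin n => κ (i + 1) (j + 1)).PosDef) : PosDefOn κ (Icc 1 n) := by
  rintro c ⟨a, ha, hca⟩
  have hc : (fun i : Fin n => c (i + 1)) ≠ 0 := by
    rw [mem_Icc] at ha
    intro h0
    simpa [Nat.sub_add_cancel ha.1, hca] using congrFun h0 ⟨a - 1, by omega⟩
  refine (h.dotProduct_mulVec_pos hc).trans_eq ?_
  simp only [quadForm, sum_Icc_one_eq_sum_fin, dotProduct, Matrix.mulVec, Matrix.of_apply,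
    Pi.star_apply, star_trivial, mul_sum]
  exact sum_congr rfl fun i _ => sum_congr rfl fun j _ => by ring

theorem sum_lowerTriangular_mul_transpose (F : ℕ → ℕ → ℝ) {n : ℕ} (i j : Fin n) :
    ∑ m : Fin n, (if (m : ℕ) ≤ i then F (m + 1) (i + 1) else 0)
        * (if (m : ℕ) ≤ j then F (m + 1) (j + 1) else 0)
      = ∑ m ∈ Icc 1 (min ((i : ℕ) + 1) ((j : ℕ) + 1)), F m (i + 1) * F m (j + 1) := by
  have hIcc : {m ∈ Icc 1 n | m ≤ min ((i : ℕ) + 1) ((j : ℕ) + 1)}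
      = Icc 1 (min ((i : ℕ) + 1) ((j : ℕ) + 1)) := by
    ext m
    simp only [mem_filter, mem_Icc]
    omega
  rw [← hIcc, sum_filter, sum_Icc_one_eq_sum_fin]
  refine sum_congr rfl fun m _ => ?_
  split_ifs <;> first | rfl | (exfalso; omega) | simp

section NewtonBasis

variable {Ω : Type*} {Kj : ℕ → Ω → Ω → ℝ} {x : ℕ → Ω}

theorem symm_and_posDefOn_Icc {n : ℕ} (hsymm : ∀ a b, Kj 1 a b = Kj 1 b a)
    (hpd : PosDefOn (fun i k => Kj 1 (x i) (x k)) (Icc 1 n))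
    (hrec : ∀ j, 1 ≤ j → Kj j (x j) (x j) ≠ 0 → Kj (j + 1) = schurComplement (Kj j) (x j)) :
    ∀ j, 1 ≤ j → j ≤ n + 1 →
      (∀ a b, Kj j a b = Kj j b a) ∧ PosDefOn (fun i k => Kj j (x i) (x k)) (Icc j n) := by
  refine Nat.le_induction (fun _ => ⟨hsymm, hpd⟩) fun j hj ih hjn => ?_
  obtain ⟨hs, hp⟩ := ih (by omega)
  rw [← insert_Icc_add_one_left_eq_Icc (by omega : j ≤ n)] at hp
  rw [hrec j hj (hp.diag_pos (mem_insert_self _ _)).ne']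
  exact ⟨schurComplement_symm hs _, hp.schurComplement (fun a b => hs _ _) (by simp)⟩

theorem eq_sum_newton_add_remainder {N : ℕ → Ω → ℝ} {n : ℕ}
    (hrec : ∀ j, 1 ≤ j → Kj j (x j) (x j) ≠ 0 → Kj (j + 1) = schurComplement (Kj j) (x j))
    (hN : ∀ j, 1 ≤ j → ∀ a, N j a = Kj j a (x j) / √(Kj j (x j) (x j)))
    (hsymm : ∀ j, 1 ≤ j → j ≤ n → ∀ a b, Kj j a b = Kj j b a)
    (hpiv : ∀ j, 1 ≤ j → j ≤ n → 0 < Kj j (x j) (x j)) :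
    ∀ t ≤ n, ∀ a b, Kj 1 a b = ∑ m ∈ Icc 1 t, N m a * N m b + Kj (t + 1) a b := by
  intro t
  induction t with
  | zero => simp
  | succ t ih =>
    intro ht a b
    have hd := hpiv (t + 1) (by omega) ht
    rw [sum_Icc_succ_top (by omega), ih (by omega), hrec (t + 1) (by omega) hd.ne', hN _ (by omega),
      hN _ (by omega), newton_mul_newton (hsymm _ (by omega) ht) hd, schurComplement]
    ring

theorem apply_pivot_eq_zero_of_lt {n : ℕ}
    (hrec : ∀ j, 1 ≤ j → Kj j (x j) (x j) ≠ 0 → Kj (j + 1) = schurComplement (Kj j) (x j))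
    (hpiv : ∀ j, 1 ≤ j → j ≤ n → 0 < Kj j (x j) (x j)) {i : ℕ} (hi : 1 ≤ i) :
    ∀ m, i + 1 ≤ m → m ≤ n + 1 → ∀ b, Kj m (x i) b = 0 := by
  refine Nat.le_induction (fun hin => ?_) fun m hm ih hmn => ?_
  · have hd := (hpiv i hi (by omega)).ne'
    rw [hrec i hi hd]
    exact schurComplement_pivot_left hd
  · rw [hrec m (by omega) (hpiv m (by omega) (by omega)).ne']
    exact schurComplement_eq_zero_of_left (ih (by omega)) _

end NewtonBasis

open Finset Matrix in
theorem newton_basis_cholesky_general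
    {Ω : Type*} (K : Ω → Ω → ℝ) (n : ℕ) (x : ℕ → Ω)
    (hsym : ∀ a b : Ω, K a b = K b a)
    (hPD : (Matrix.of fun i j : Fin n => K (x ((i : ℕ) + 1)) (x ((j : ℕ) + 1))).PosDef)
    (Kj : ℕ → Ω → Ω → ℝ) (N : ℕ → Ω → ℝ)
    (hK1 : ∀ a b : Ω, Kj 1 a b = K a b)
    (hrec : ∀ j : ℕ, 1 ≤ j → Kj j (x j) (x j) ≠ 0 → ∀ a b : Ω,
      Kj (j + 1) a b
        = Kj j a b - Kj j a (x j) * Kj j (x j) b / Kj j (x j) (x j))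
    (hN : ∀ j : ℕ, 1 ≤ j → ∀ a : Ω,
      N j a = Kj j a (x j) / Real.sqrt (Kj j (x j) (x j))) :
    (∀ i j : ℕ, 1 ≤ i → i ≤ n → 1 ≤ j → j ≤ n →
      K (x i) (x j) = ∑ m ∈ Finset.Icc 1 (min i j), N m (x i) * N m (x j)) ∧
    (Matrix.of fun i j : Fin n => K (x ((i : ℕ) + 1)) (x ((j : ℕ) + 1)))
      = (Matrix.of fun i m : Fin n => if (m : ℕ) ≤ (i : ℕ)
            then N ((m : ℕ) + 1) (x ((i : ℕ) + 1)) else 0)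
        * (Matrix.of fun i m : Fin n => if (m : ℕ) ≤ (i : ℕ)
            then N ((m : ℕ) + 1) (x ((i : ℕ) + 1)) else 0)ᵀ := by
  obtain rfl : Kj 1 = K := funext₂ hK1
  have hrec' : ∀ j, 1 ≤ j → Kj j (x j) (x j) ≠ 0 → Kj (j + 1) = schurComplement (Kj j) (x j) :=
    fun j hj hd => funext₂ (hrec j hj hd)
  have hlevels := symm_and_posDefOn_Icc hsym
    (PosDefOn.Icc_one_of_posDef (κ := fun i k => Kj 1 (x i) (x k)) hPD) hrec'
  have hpiv : ∀ j, 1 ≤ j → j ≤ n → 0 < Kj j (x j) (x j) := fun j hj hjn =>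
    (hlevels j hj (by omega)).2.diag_pos (by simp [hjn])
  have hle : ∀ i j, 1 ≤ i → i ≤ j → j ≤ n →
      Kj 1 (x i) (x j) = ∑ m ∈ Icc 1 i, N m (x i) * N m (x j) := fun i j hi hij hjn => by
    rw [eq_sum_newton_add_remainder hrec' hN (fun j hj hjn => (hlevels j hj (by omega)).1)
      hpiv i (by omega), apply_pivot_eq_zero_of_lt hrec' hpiv hi _ le_rfl (by omega), add_zero]
  have hentry : ∀ i j : ℕ, 1 ≤ i → i ≤ n → 1 ≤ j → j ≤ n →
      Kj 1 (x i) (x j) = ∑ m ∈ Icc 1 (min i j), N m (x i) * N m (x j) := by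
    intro i j hi hin hj hjn
    rcases le_total i j with h | h
    · rw [min_eq_left h, hle i j hi h hjn]
    · rw [min_eq_right h, hsym, hle j i hj h hin]
      exact sum_congr rfl fun m _ => mul_comm _ _
  refine ⟨hentry, Matrix.ext fun i j => ?_⟩
  rw [Matrix.of_apply, Matrix.mul_apply, hentry _ _ (by omega) (by omega) (by omega) (by omega)]
  exact (sum_lowerTriangular_mul_transpose (fun m i => N m (x i)) i j).symm

open Finset Matrix in
/-- Newton basis Cholesky factorization of the kernel matrix:
`K(x_i,x_j) = Σ_{m=1}^{min(i,j)} N_m(x_i) N_m(x_j)`, i.e. the lower triangular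
matrix `L` with `L_{im} = N_m(x_i)` for `m ≤ i` satisfies `K = L Lᵀ`. -/
theorem newton_basis_cholesky
    {Ω : Type*} (K : Ω → Ω → ℝ) (n : ℕ) (x : ℕ → Ω)
    (hsym : ∀ a b : Ω, K a b = K b a)
    (hdist : ∀ i k : ℕ, 1 ≤ i → i ≤ n → 1 ≤ k → k ≤ n → x i = x k → i = k)
    (hPD : (Matrix.of fun i j : Fin n => K (x ((i : ℕ) + 1)) (x ((j : ℕ) + 1))).PosDef)
    (Kj : ℕ → Ω → Ω → ℝ) (N : ℕ → Ω → ℝ)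
    (hK1 : ∀ a b : Ω, Kj 1 a b = K a b)
    (hrec : ∀ j : ℕ, 1 ≤ j → Kj j (x j) (x j) ≠ 0 → ∀ a b : Ω,
      Kj (j + 1) a b
        = Kj j a b - Kj j a (x j) * Kj j (x j) b / Kj j (x j) (x j))
    (hN : ∀ j : ℕ, 1 ≤ j → ∀ a : Ω,
      N j a = Kj j a (x j) / Real.sqrt (Kj j (x j) (x j))) :
    (∀ i j : ℕ, 1 ≤ i → i ≤ n → 1 ≤ j → j ≤ n →
      K (x i) (x j) = ∑ m ∈ Finset.Icc 1 (min i j), N m (x i) * N m (x j)) ∧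
    (Matrix.of fun i j : Fin n => K (x ((i : ℕ) + 1)) (x ((j : ℕ) + 1)))
      = (Matrix.of fun i m : Fin n => if (m : ℕ) ≤ (i : ℕ)
            then N ((m : ℕ) + 1) (x ((i : ℕ) + 1)) else 0)
        * (Matrix.of fun i m : Fin n => if (m : ℕ) ≤ (i : ℕ)
            then N ((m : ℕ) + 1) (x ((i : ℕ) + 1)) else 0)ᵀ :=
  newton_basis_cholesky_general K n x hsym hPD Kj N hK1 hrec hN
end

section
/- Strict positive definiteness of the kernel on the chosen points guarantees that the recursion is well-defined: for distinct points x_1,…,x_n such that the kernel matrix (K(x_i,x_j))_{i,j=1}^n is positive definite, one has K_j(x_j,x_j) > 0 for all 1 ≤ j ≤ n in the recursion K_{j+1}(x,y) = K_j(x,y) − K_j(x,x_j)K_j(x_j,y)/K_j(x_j,x_j). -/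
/-!
On the points, `K_j` is the Gram matrix of vectors `u_1, …, u_n` for the inner product
`⟨u, w⟩ = uᵀ M w` given by the positive definite kernel matrix `M`, starting from the standard
basis: one step of the recursion replaces each `u_i` by its orthogonalization against `u_j`.
Since for `i ≥ j` the vector `u_i` stays `e_i` plus a combination of `e_1, …, e_{j-1}`,
the pivot vector `u_j` is nonzero, so `K_j(x_j, x_j) = ⟨u_j, u_j⟩ > 0`.
-/

open Matrix

theorem LinearMap.BilinForm.IsSymm.apply_sub_mul_div_eq {V : Type*} [AddCommGroup V]
    [Module ℝ V] {B : LinearMap.BilinForm ℝ V} (hB : B.IsSymm) (u w p : V) (hp : B p p ≠ 0) :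
    B u w - B u p * B p w / B p p
      = B (u - (B u p / B p p) • p) (w - (B w p / B p p) • p) := by
  simp only [map_sub, map_smul, LinearMap.sub_apply, LinearMap.smul_apply, smul_eq_mul,
    hB.eq w p]
  field_simp
  ring

namespace Matrix

variable {n : ℕ}

theorem sub_smul_apply_eq_one_apply {R : Type*} [Ring R] {u : Matrix (Fin n) (Fin n) R}
    {p : ℕ}
    (hu : ∀ i m : Fin n, p ≤ i → p ≤ m → u i m = (1 : Matrix (Fin n) (Fin n) R) i m)
    (q : Fin n) (hq : (q : ℕ) = p) (c : Fin n → R) :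
    ∀ i m : Fin n, p + 1 ≤ i → p + 1 ≤ m →
      (u i - c i • u q) m = (1 : Matrix (Fin n) (Fin n) R) i m := by
  intro i m hi hm
  have hqm : q ≠ m := by omega
  rw [Pi.sub_apply, Pi.smul_apply, hu i m (by omega) (by omega), hu q m hq.ge (by omega),
    one_apply_ne hqm, smul_zero, sub_zero]

theorem PosDef.isSymm_toBilin' {M : Matrix (Fin n) (Fin n) ℝ} (hM : M.PosDef) :
    M.toBilin'.IsSymm :=
  isSymm_toBilin'_iff_isSymm.2 (isHermitian_iff_isSymm.1 hM.isHermitian)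

theorem PosDef.toBilin'_apply_self_pos_of_apply_eq_one {M : Matrix (Fin n) (Fin n) ℝ}
    (hM : M.PosDef) {v : Fin n → ℝ} {q : Fin n} (hv : v q = 1) : 0 < M.toBilin' v v := by
  have hv0 : v ≠ 0 := fun h => by simp [h] at hv
  simpa [toBilin'_apply'] using hM.dotProduct_mulVec_pos hv0

def IsSchurRecursion {𝕜 : Type*} [Field 𝕜] (S : ℕ → Matrix (Fin n) (Fin n) 𝕜) : Prop :=
  ∀ p (hp : p < n), S p ⟨p, hp⟩ ⟨p, hp⟩ ≠ 0 → ∀ i k,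
    S (p + 1) i k = S p i k - S p i ⟨p, hp⟩ * S p ⟨p, hp⟩ k / S p ⟨p, hp⟩ ⟨p, hp⟩

variable {M : Matrix (Fin n) (Fin n) ℝ} {S : ℕ → Matrix (Fin n) (Fin n) ℝ}

theorem IsSchurRecursion.exists_gram (hS : IsSchurRecursion S) (hM : M.PosDef) (h0 : S 0 = M) :
    ∀ p ≤ n, ∃ u : Matrix (Fin n) (Fin n) ℝ, (∀ i k, S p i k = M.toBilin' (u i) (u k)) ∧
      ∀ i m : Fin n, p ≤ i → p ≤ m → u i m = (1 : Matrix (Fin n) (Fin n) ℝ) i m := by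
  intro p hp
  induction p with
  | zero =>
    exact ⟨fun i => Pi.single i 1, fun i k => by rw [h0, toBilin'_single],
      fun _ _ _ _ => one_eq_pi_single.symm⟩
  | succ p ih =>
    obtain ⟨u, hgram, hu⟩ := ih (by omega)
    set q : Fin n := ⟨p, by omega⟩
    set B := M.toBilin'
    have hpivot : 0 < B (u q) (u q) :=
      hM.toBilin'_apply_self_pos_of_apply_eq_one ((hu q q le_rfl le_rfl).trans (one_apply_eq q))
    refine ⟨fun i => u i - (B (u i) (u q) / B (u q) (u q)) • u q, fun i k => ?_,
      sub_smul_apply_eq_one_apply hu q rfl _⟩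
    rw [hS p (by omega) (hgram q q ▸ hpivot.ne'), hgram, hgram, hgram, hgram]
    exact hM.isSymm_toBilin'.apply_sub_mul_div_eq _ _ _ hpivot.ne'

theorem IsSchurRecursion.pivot_pos (hS : IsSchurRecursion S) (hM : M.PosDef) (h0 : S 0 = M)
    (p : ℕ) (hp : p < n) : 0 < S p ⟨p, hp⟩ ⟨p, hp⟩ := by
  obtain ⟨u, hgram, hu⟩ := hS.exists_gram hM h0 p hp.le
  rw [hgram]
  exact hM.toBilin'_apply_self_pos_of_apply_eq_one ((hu _ _ le_rfl le_rfl).trans (one_apply_eq _))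

end Matrix

theorem recursion_well_defined_of_posdef_general
    {Ω : Type*} (K : Ω → Ω → ℝ) (n : ℕ) (x : ℕ → Ω)
    (hPD : (Matrix.of fun i j : Fin n => K (x ((i : ℕ) + 1)) (x ((j : ℕ) + 1))).PosDef)
    (Kj : ℕ → Ω → Ω → ℝ)
    (hK1 : ∀ a b : Ω, Kj 1 a b = K a b)
    (hrec : ∀ j : ℕ, 1 ≤ j → Kj j (x j) (x j) ≠ 0 → ∀ a b : Ω,
      Kj (j + 1) a b
        = Kj j a b - Kj j a (x j) * Kj j (x j) b / Kj j (x j) (x j)) :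
    ∀ j : ℕ, 1 ≤ j → j ≤ n → 0 < Kj j (x j) (x j) := by
  intro j hj hjn
  obtain ⟨p, rfl⟩ : ∃ p, j = p + 1 := ⟨j - 1, by omega⟩
  let S : ℕ → Matrix (Fin n) (Fin n) ℝ := fun p i k => Kj (p + 1) (x (i + 1)) (x (k + 1))
  have hS : IsSchurRecursion S := fun p _ hpivot _ _ => hrec (p + 1) (by omega) hpivot _ _
  have h0 : S 0 = Matrix.of fun i j : Fin n => K (x ((i : ℕ) + 1)) (x ((j : ℕ) + 1)) := by
    ext i k
    exact hK1 _ _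
  exact hS.pivot_pos hPD h0 p (by omega)

/-- Strict positive definiteness of the kernel matrix guarantees that the
Newton/Schur recursion is well-defined: `K_j(x_j,x_j) > 0` for all `1 ≤ j ≤ n`. -/
theorem recursion_well_defined_of_posdef
    {Ω : Type*} (K : Ω → Ω → ℝ) (n : ℕ) (x : ℕ → Ω)
    (hsym : ∀ a b : Ω, K a b = K b a)
    (hdist : ∀ i k : ℕ, 1 ≤ i → i ≤ n → 1 ≤ k → k ≤ n → x i = x k → i = k)
    (hPD : (Matrix.of fun i j : Fin n => K (x ((i : ℕ) + 1)) (x ((j : ℕ) + 1))).PosDef)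
    (Kj : ℕ → Ω → Ω → ℝ)
    (hK1 : ∀ a b : Ω, Kj 1 a b = K a b)
    (hrec : ∀ j : ℕ, 1 ≤ j → Kj j (x j) (x j) ≠ 0 → ∀ a b : Ω,
      Kj (j + 1) a b
        = Kj j a b - Kj j a (x j) * Kj j (x j) b / Kj j (x j) (x j)) :
    ∀ j : ℕ, 1 ≤ j → j ≤ n → 0 < Kj j (x j) (x j) :=
  recursion_well_defined_of_posdef_general K n x hPD Kj hK1 hrec
end

section
/- In an RKHS H with kernel K, the squared Power Function P²_{X_n}(z) for the kernel interpolant on x_1,…,x_n equals K(z,z) − Σ_{m=1}^n N_m(z)², where N_m are the Newton basis functions; equivalently, the Power Function recursion P²_{j+1}(z) = P²_j(z) − N_j(z)² holds. -/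
/-!
By the Riesz isometry `toDual`, `P_j(z)` is the distance in `H` from `Φ z` to the span of
`Φ x_1, …, Φ x_j`. Orthonormalising `Φ x_1, Φ x_2, …` by Gram–Schmidt into `u_0, u_1, …`, an
induction on the recursion shows `K_{t+1}(a, b) = ⟪r_t (Φ a), r_t (Φ b)⟫`, where `r_t` removes the
components along `u_0, …, u_{t-1}`; hence `N_{t+1} = ⟪u_t, Φ ·⟫`. Pythagoras then gives
`P_j(z)² = ‖Φ z‖² - ∑_{m<j} ⟪u_m, Φ z⟫²`.
-/

open RealInnerProductSpace Finset InnerProductSpace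

section OrthoResidual

variable {ι H : Type*} [NormedAddCommGroup H] [InnerProductSpace ℝ H]

def orthoResidual (u : ι → H) (s : Finset ι) (w : H) : H :=
  w - ∑ m ∈ s, ⟪u m, w⟫ • u m

variable {u : ι → H} (s : Finset ι)

theorem Orthonormal.inner_orthoResidual_orthoResidual (hu : Orthonormal ℝ u) (a b : H) :
    ⟪orthoResidual u s a, orthoResidual u s b⟫ = ⟪a, b⟫ - ∑ m ∈ s, ⟪u m, a⟫ * ⟪u m, b⟫ := by
  rw [orthoResidual, orthoResidual, inner_sub_left, inner_sub_right, inner_sub_right, hu.inner_sum]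
  simp only [inner_sum, sum_inner, real_inner_smul_left, real_inner_smul_right,
    real_inner_comm (u _) a, conj_trivial, mul_comm ⟪u _, b⟫]
  ring

theorem Orthonormal.norm_orthoResidual_sq (hu : Orthonormal ℝ u) (a : H) :
    ‖orthoResidual u s a‖ ^ 2 = ‖a‖ ^ 2 - ∑ m ∈ s, ⟪u m, a⟫ ^ 2 := by
  rw [← real_inner_self_eq_norm_sq, ← real_inner_self_eq_norm_sq,
    hu.inner_orthoResidual_orthoResidual]
  simp only [sq]

theorem Orthonormal.inner_orthoResidual_of_mem (hu : Orthonormal ℝ u) {k : ι} (hk : k ∈ s)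
    (w : H) : ⟪u k, orthoResidual u s w⟫ = 0 := by
  rw [orthoResidual, inner_sub_right, hu.inner_right_sum _ hk, sub_self]

theorem Orthonormal.inner_orthoResidual_of_notMem (hu : Orthonormal ℝ u) {k : ι} (hk : k ∉ s)
    (w : H) : ⟪u k, orthoResidual u s w⟫ = ⟪u k, w⟫ := by
  rw [orthoResidual, inner_sub_right, inner_sum, sum_eq_zero, sub_zero]
  intro m hm
  rw [real_inner_smul_right, hu.2 (ne_of_mem_of_not_mem hm hk).symm, mul_zero]

theorem Orthonormal.inner_orthoResidual_of_mem_span (hu : Orthonormal ℝ u) (a : H) {w : H}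
    (hw : w ∈ Submodule.span ℝ (u '' s)) : ⟪orthoResidual u s a, w⟫ = 0 := by
  induction hw using Submodule.span_induction with
  | mem _ h =>
    obtain ⟨k, hk, rfl⟩ := h
    rw [real_inner_comm]
    exact hu.inner_orthoResidual_of_mem s hk a
  | zero => exact inner_zero_right _
  | add _ _ _ _ h₁ h₂ => rw [inner_add_right, h₁, h₂, add_zero]
  | smul c _ _ h => rw [real_inner_smul_right, h, mul_zero]

theorem sum_inner_smul_mem_span (w : H) : ∑ m ∈ s, ⟪u m, w⟫ • u m ∈ Submodule.span ℝ (u '' s) :=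
  Submodule.sum_mem _ fun m hm => Submodule.smul_mem _ _ (Submodule.subset_span ⟨m, hm, rfl⟩)

theorem Orthonormal.norm_orthoResidual_eq_iInf (hu : Orthonormal ℝ u) {κ : Type*} [Fintype κ]
    {f : κ → H} (hspan : Submodule.span ℝ (Set.range f) = Submodule.span ℝ (u '' s)) (a : H) :
    ‖orthoResidual u s a‖ = ⨅ c : κ → ℝ, ‖a - ∑ i, c i • f i‖ := by
  set V := Submodule.span ℝ (Set.range f)
  have hsurj : Function.Surjective fun c : κ → ℝ =>
      (⟨∑ i, c i • f i, (Submodule.mem_span_range_iff_exists_fun ℝ).2 ⟨c, rfl⟩⟩ : V) :=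
    fun w => by
      obtain ⟨c, hc⟩ := (Submodule.mem_span_range_iff_exists_fun ℝ).1 w.2
      exact ⟨c, Subtype.ext hc⟩
  calc ‖orthoResidual u s a‖ = ⨅ w : V, ‖a - w‖ :=
        (V.norm_eq_iInf_iff_real_inner_eq_zero (hspan ▸ sum_inner_smul_mem_span s a)).2
          fun _ hw => hu.inner_orthoResidual_of_mem_span s a (hspan ▸ hw)
    _ = ⨅ c : κ → ℝ, ‖a - ∑ i, c i • f i‖ := (hsurj.iInf_comp fun w : V => ‖a - w‖).symm

end OrthoResidual

section GramSchmidt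

variable {ι H : Type*} [NormedAddCommGroup H] [InnerProductSpace ℝ H]
  [LinearOrder ι] [LocallyFiniteOrderBot ι] [WellFoundedLT ι]

theorem gramSchmidt_eq_orthoResidual (f : ι → H) (n : ι) :
    gramSchmidt ℝ f n = orthoResidual (gramSchmidtNormed ℝ f) (Iio n) (f n) := by
  rw [orthoResidual, eq_sub_iff_add_eq]
  conv_rhs => rw [gramSchmidt_def'' ℝ f n]
  congr 1
  refine sum_congr rfl fun i _ => ?_
  simp only [gramSchmidtNormed, RCLike.ofReal_real_eq_id, id, real_inner_smul_left, smul_smul]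
  congr 1
  ring

theorem norm_smul_gramSchmidtNormed (f : ι → H) (n : ι) :
    ‖gramSchmidt ℝ f n‖ • gramSchmidtNormed ℝ f n = gramSchmidt ℝ f n := by
  by_cases h : gramSchmidt ℝ f n = 0
  · simp [gramSchmidtNormed, h]
  · exact smul_inv_smul₀ (norm_ne_zero_iff.2 h) _

theorem inner_orthoResidual_gramSchmidt {f : ι → H} (hf : LinearIndependent ℝ f) (n : ι)
    (w : H) :
    ⟪orthoResidual (gramSchmidtNormed ℝ f) (Iio n) w,
        orthoResidual (gramSchmidtNormed ℝ f) (Iio n) (f n)⟫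
      = ‖gramSchmidt ℝ f n‖ * ⟪gramSchmidtNormed ℝ f n, w⟫ := by
  rw [← gramSchmidt_eq_orthoResidual]
  conv_lhs => rw [← norm_smul_gramSchmidtNormed]
  rw [real_inner_smul_right, real_inner_comm,
    (gramSchmidtNormed_orthonormal hf).inner_orthoResidual_of_notMem _ notMem_Iio_self]

end GramSchmidt

theorem span_range_fin_eq_span_gramSchmidtNormed {H : Type*} [NormedAddCommGroup H]
    [InnerProductSpace ℝ H] (f : ℕ → H) (j : ℕ) :
    Submodule.span ℝ (Set.range fun i : Fin j => f i)
      = Submodule.span ℝ (gramSchmidtNormed ℝ f '' ↑(Iio j)) := by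
  rw [coe_Iio, span_gramSchmidtNormed, span_gramSchmidt_Iio, ← Fin.range_val, ← Set.range_comp]
  rfl

theorem linearIndependent_of_posDef_kernel {H Ω : Type*} [NormedAddCommGroup H]
    [InnerProductSpace ℝ H] (K : Ω → Ω → ℝ) (Φ : Ω → H) (hker : ∀ a b, K a b = ⟪Φ a, Φ b⟫)
    (hSPD : ∀ (m : ℕ) (y : Fin m → Ω), Function.Injective y →
      (Matrix.of fun i j : Fin m => K (y i) (y j)).PosDef) :
    LinearIndependent ℝ Φ := by
  rw [linearIndependent_iff_finset_linearIndependent]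
  intro s
  let y : Fin s.card → Ω := fun i => s.equivFin.symm i
  have hgram : (Matrix.gram ℝ (Φ ∘ y)).PosDef := by
    convert hSPD _ y (Subtype.val_injective.comp s.equivFin.symm.injective) using 1
    ext i j
    simp [Matrix.gram, hker]
  exact (linearIndependent_equiv s.equivFin.symm).1 (Matrix.linearIndependent_of_posDef_gram hgram)

theorem norm_toDual_sub_sum {H κ : Type*} [NormedAddCommGroup H] [InnerProductSpace ℝ H]
    [CompleteSpace H] (s : Finset κ) (a : H) (c : κ → ℝ) (v : κ → H) :
    ‖toDual ℝ H a - ∑ i ∈ s, c i • toDual ℝ H (v i)‖ = ‖a - ∑ i ∈ s, c i • v i‖ := by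
  rw [← (toDual ℝ H).norm_map]
  simp [map_sub, map_sum]

theorem sum_Icc_one_eq_sum_Iio {M : Type*} [AddCommMonoid M] (h : ℕ → M) (j : ℕ) :
    ∑ m ∈ Icc 1 j, h m = ∑ t ∈ Iio j, h (t + 1) := by
  rw [Nat.Iio_eq_range, ← Ico_add_one_right_eq_Icc, sum_Ico_eq_sum_range, add_tsub_cancel_right]
  simp only [add_comm 1]

section NewtonBasis

variable {H Ω : Type*} [NormedAddCommGroup H] [InnerProductSpace ℝ H] {Φ : Ω → H} {x : ℕ → Ω}
  {Kj : ℕ → Ω → Ω → ℝ}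

-- `𝒇 n` is the feature of the center `x (n + 1)`: centers are numbered from 1, Gram–Schmidt from 0.
local notation "𝒇" => fun n : ℕ => Φ (x (n + 1))
local notation "𝒖" => gramSchmidtNormed ℝ 𝒇

theorem newtonKernel_apply_center (hli : LinearIndependent ℝ 𝒇) {t : ℕ}
    (hKt : ∀ a b,
      Kj (t + 1) a b = ⟪orthoResidual 𝒖 (Iio t) (Φ a), orthoResidual 𝒖 (Iio t) (Φ b)⟫)
    (a : Ω) : Kj (t + 1) a (x (t + 1)) = ‖gramSchmidt ℝ 𝒇 t‖ * ⟪𝒖 t, Φ a⟫ :=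
  (hKt a _).trans (inner_orthoResidual_gramSchmidt hli t (Φ a))

theorem newtonKernel_center_center {t : ℕ}
    (hKt : ∀ a b,
      Kj (t + 1) a b = ⟪orthoResidual 𝒖 (Iio t) (Φ a), orthoResidual 𝒖 (Iio t) (Φ b)⟫) :
    Kj (t + 1) (x (t + 1)) (x (t + 1)) = ‖gramSchmidt ℝ 𝒇 t‖ ^ 2 := by
  rw [hKt, ← real_inner_self_eq_norm_sq, gramSchmidt_eq_orthoResidual]

theorem newtonKernel_eq_inner_orthoResidual (hli : LinearIndependent ℝ 𝒇)
    (hK1 : ∀ a b, Kj 1 a b = ⟪Φ a, Φ b⟫)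
    (hrec : ∀ j : ℕ, 1 ≤ j → Kj j (x j) (x j) ≠ 0 → ∀ a b : Ω,
      Kj (j + 1) a b = Kj j a b - Kj j a (x j) * Kj j (x j) b / Kj j (x j) (x j))
    (t : ℕ) (a b : Ω) :
    Kj (t + 1) a b = ⟪orthoResidual 𝒖 (Iio t) (Φ a), orthoResidual 𝒖 (Iio t) (Φ b)⟫ := by
  induction t generalizing a b with
  | zero => simp [orthoResidual, hK1]
  | succ t ih =>
    have hu := gramSchmidtNormed_orthonormal hli
    have hg : ‖gramSchmidt ℝ 𝒇 t‖ ≠ 0 := norm_ne_zero_iff.2 (gramSchmidt_ne_zero t hli)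
    have hdiag := newtonKernel_center_center ih
    have hrow : Kj (t + 1) (x (t + 1)) b = ‖gramSchmidt ℝ 𝒇 t‖ * ⟪𝒖 t, Φ b⟫ := by
      rw [ih, real_inner_comm, ← ih]
      exact newtonKernel_apply_center hli ih b
    rw [hrec (t + 1) (Nat.le_add_left 1 t) (hdiag ▸ pow_ne_zero 2 hg), hdiag, hrow,
      newtonKernel_apply_center hli ih, ih, hu.inner_orthoResidual_orthoResidual,
      hu.inner_orthoResidual_orthoResidual, Nat.Iio_eq_range, Nat.Iio_eq_range, sum_range_succ]
    field_simp
    ring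

theorem newtonBasis_eq_inner_gramSchmidtNormed {N : ℕ → Ω → ℝ} (hli : LinearIndependent ℝ 𝒇)
    (hK1 : ∀ a b, Kj 1 a b = ⟪Φ a, Φ b⟫)
    (hrec : ∀ j : ℕ, 1 ≤ j → Kj j (x j) (x j) ≠ 0 → ∀ a b : Ω,
      Kj (j + 1) a b = Kj j a b - Kj j a (x j) * Kj j (x j) b / Kj j (x j) (x j))
    (hN : ∀ j : ℕ, 1 ≤ j → ∀ a : Ω, N j a = Kj j a (x j) / Real.sqrt (Kj j (x j) (x j)))
    (t : ℕ) (z : Ω) : N (t + 1) z = ⟪𝒖 t, Φ z⟫ := by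
  have hKt := newtonKernel_eq_inner_orthoResidual hli hK1 hrec t
  have hg : ‖gramSchmidt ℝ 𝒇 t‖ ≠ 0 := norm_ne_zero_iff.2 (gramSchmidt_ne_zero t hli)
  rw [hN (t + 1) (Nat.le_add_left 1 t), newtonKernel_apply_center hli hKt,
    newtonKernel_center_center hKt, Real.sqrt_sq (norm_nonneg _)]
  field_simp

end NewtonBasis

/-- The squared Power Function of interpolation on `x_1,…,x_j` equals
`K(z,z) − Σ_{m=1}^j N_m(z)²`; equivalently the recursion
`P_{j+1}²(z) = P_j²(z) − N_{j+1}(z)²` holds. -/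
theorem power_function_newton_representation
    {H : Type*} [NormedAddCommGroup H] [InnerProductSpace ℝ H] [CompleteSpace H]
    {Ω : Type*} (K : Ω → Ω → ℝ) (Φ : Ω → H)
    (hker : ∀ a b : Ω, K a b = ⟪Φ a, Φ b⟫)
    (hSPD : ∀ (m : ℕ) (y : Fin m → Ω), Function.Injective y →
      (Matrix.of fun i j : Fin m => K (y i) (y j)).PosDef)
    (x : ℕ → Ω) (hdist : Function.Injective x)
    (Kj : ℕ → Ω → Ω → ℝ) (N : ℕ → Ω → ℝ)
    (hK1 : ∀ a b : Ω, Kj 1 a b = K a b)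
    (hrec : ∀ j : ℕ, 1 ≤ j → Kj j (x j) (x j) ≠ 0 → ∀ a b : Ω,
      Kj (j + 1) a b
        = Kj j a b - Kj j a (x j) * Kj j (x j) b / Kj j (x j) (x j))
    (hN : ∀ j : ℕ, 1 ≤ j → ∀ a : Ω,
      N j a = Kj j a (x j) / Real.sqrt (Kj j (x j) (x j)))
    (P : ℕ → Ω → ℝ)
    (hP : ∀ (j : ℕ) (z : Ω),
      P j z = ⨅ u : Fin j → ℝ,
        ‖InnerProductSpace.toDual ℝ H (Φ z)
          - ∑ i, u i • InnerProductSpace.toDual ℝ H (Φ (x ((i : ℕ) + 1)))‖) :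
    (∀ (j : ℕ) (z : Ω),
      P j z ^ 2 = K z z - ∑ m ∈ Finset.Icc 1 j, N m z ^ 2) ∧
    (∀ (j : ℕ) (z : Ω),
      P (j + 1) z ^ 2 = P j z ^ 2 - N (j + 1) z ^ 2) := by
  have hli : LinearIndependent ℝ fun n => Φ (x (n + 1)) :=
    (linearIndependent_of_posDef_kernel K Φ hker hSPD).comp _ (hdist.comp Nat.succ_injective)
  have hNu := newtonBasis_eq_inner_gramSchmidtNormed hli (fun a b => (hK1 a b).trans (hker a b))
    hrec hN
  have hu := gramSchmidtNormed_orthonormal hli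
  have hpower : ∀ j z, P j z ^ 2 = K z z - ∑ m ∈ Icc 1 j, N m z ^ 2 := by
    intro j z
    simp_rw [hP, norm_toDual_sub_sum]
    rw [← hu.norm_orthoResidual_eq_iInf _ (span_range_fin_eq_span_gramSchmidtNormed _ j),
      hu.norm_orthoResidual_sq, hker, real_inner_self_eq_norm_sq, sum_Icc_one_eq_sum_Iio]
    simp only [hNu]
  refine ⟨hpower, fun j z => ?_⟩
  rw [hpower, hpower, sum_Icc_succ_top (Nat.le_add_left 1 j)]
  ring
end

section
/- Greedy optimality of one step: given already chosen points x_1,…,x_{j−1}, the squared Power Function after adding a candidate point x is P²(z) = K(z,z) − Σ_{k=1}^{j−1} N_k(z)² − K_j(z,x)²/K_j(x,x), so choosing x to maximize K_j(z,x)²/K_j(x,x) among candidates minimizes the resulting Power Function at z. -/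
/-!
The recursive kernel `K_{m+1}(a, b)` is the inner product of the residuals of `Φ a` and `Φ b`
after orthogonal projection onto `U_m = span {Φ x_1, …, Φ x_m}`. Enlarging a subspace `U` by one
vector `w` changes every residual by a rank-one Gram–Schmidt step along the residual of `w`.
This gives the recursion defining `K_j` (its denominators never vanish: strict positive
definiteness makes the `Φ x_k` linearly independent) and, telescoping,
`Σ_{k ≤ j} N_k(z)² = K(z,z) − K_{j+1}(z,z)`. The Power Function for the points
`x_1, …, x_j, y` is the distance from `Φ z` to `U_j ⊔ span {Φ y}`, so one more Gram–Schmidt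
step gives `P(z)² = K_{j+1}(z,z) − K_{j+1}(z,y)² / K_{j+1}(y,y)`.
-/

open RealInnerProductSpace Submodule Set

instance FiniteDimensional.span_range {K V ι : Type*} [DivisionRing K] [AddCommGroup V]
    [Module K V] [Finite ι] (f : ι → V) : FiniteDimensional K (span K (range f)) :=
  FiniteDimensional.span_of_finite K (finite_range f)

theorem Fin.snoc_restrict_eq {α : Type*} (f : ℕ → α) (m : ℕ) :
    Fin.snoc (fun i : Fin m => f i) (f m) = fun i : Fin (m + 1) => f i := by
  funext i
  induction i using Fin.lastCases <;> simp

theorem Submodule.span_range_fin_succ {R M : Type*} [Semiring R] [AddCommMonoid M] [Module R M]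
    (f : ℕ → M) (m : ℕ) :
    span R (range fun i : Fin (m + 1) => f i)
      = span R (range fun i : Fin m => f i) ⊔ R ∙ f m := by
  rw [← Fin.snoc_restrict_eq, Fin.range_snoc, span_insert, sup_comm]

theorem notMem_span_range_fin {K V : Type*} [DivisionRing K] [AddCommGroup V] [Module K V]
    {f : ℕ → V} (hf : ∀ m, LinearIndependent K fun i : Fin m => f i) (m : ℕ) :
    f m ∉ span K (range fun i : Fin m => f i) := by
  have h := hf (m + 1)
  rw [← Fin.snoc_restrict_eq, linearIndependent_finSnoc] at h
  exact h.2

theorem Finset.sum_Icc_one_eq_sum_range {M : Type*} [AddCommMonoid M] (g : ℕ → M) (n : ℕ) :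
    ∑ k ∈ Finset.Icc 1 n, g k = ∑ k ∈ Finset.range n, g (k + 1) := by
  rw [← Nat.Ico_zero_eq_range, Finset.sum_Ico_add', zero_add, ← Order.succ_eq_add_one,
    Finset.Ico_succ_right_eq_Icc]

section
variable {E : Type*} [NormedAddCommGroup E] [InnerProductSpace ℝ E]

theorem inner_starProjection_right_eq (U : Submodule ℝ E) [U.HasOrthogonalProjection] (v w : E) :
    ⟪v, U.starProjection w⟫ = ⟪U.starProjection v, U.starProjection w⟫ := by
  rw [U.inner_starProjection_left_eq_right,
    U.starProjection_eq_self_iff.mpr (U.starProjection_apply_mem w)]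

theorem starProjection_orthogonal_sup_span_singleton (U : Submodule ℝ E)
    [U.HasOrthogonalProjection] (w : E) [(U ⊔ ℝ ∙ w).HasOrthogonalProjection] (v : E) :
    (U ⊔ ℝ ∙ w)ᗮ.starProjection v = Uᗮ.starProjection v
      - (⟪Uᗮ.starProjection w, Uᗮ.starProjection v⟫ / ‖Uᗮ.starProjection w‖ ^ 2)
        • Uᗮ.starProjection w := by
  set R := Uᗮ.starProjection
  set c := ⟪R w, R v⟫ / ‖R w‖ ^ 2
  have hc : c * ‖R w‖ ^ 2 = ⟪R w, R v⟫ := by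
    rcases eq_or_ne (R w) 0 with h | h
    · simp [h]
    · exact div_mul_cancel₀ _ (by positivity)
  refine eq_starProjection_of_mem_orthogonal' ?_ ?_ (add_sub_cancel _ v).symm
  · refine inf_orthogonal U _ ▸ mem_inf.mpr ⟨sub_mem (starProjection_apply_mem _ _)
      (smul_mem _ _ (starProjection_apply_mem _ _)), ?_⟩
    rw [mem_orthogonal_singleton_iff_inner_right, inner_sub_right, real_inner_smul_right,
      inner_starProjection_right_eq _ w v, inner_starProjection_right_eq _ w w,
      real_inner_self_eq_norm_sq, hc, sub_self]
  · have hsub : v - (R v - c • R w) = U.starProjection v + c • (w - U.starProjection w) := by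
      simp only [R, starProjection_orthogonal_val]
      abel
    rw [hsub]
    exact le_orthogonal_orthogonal _ <| add_mem (mem_sup_left (starProjection_apply_mem _ _))
      (smul_mem _ _ (sub_mem (mem_sup_right (mem_span_singleton_self w))
        (mem_sup_left (starProjection_apply_mem _ _))))

/-- For `U` the span of the first `m` feature vectors this is the paper's `K_{m+1}`. -/
noncomputable def residualKernel (U : Submodule ℝ E) [U.HasOrthogonalProjection]
    (a b : E) : ℝ :=
  ⟪Uᗮ.starProjection a, Uᗮ.starProjection b⟫

theorem residualKernel_comm (U : Submodule ℝ E) [U.HasOrthogonalProjection] (a b : E) :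
    residualKernel U a b = residualKernel U b a :=
  real_inner_comm _ _

theorem residualKernel_bot (a b : E) : residualKernel ⊥ a b = ⟪a, b⟫ := by
  simp [residualKernel, starProjection_top]

theorem residualKernel_self (U : Submodule ℝ E) [U.HasOrthogonalProjection] (a : E) :
    residualKernel U a a = ‖Uᗮ.starProjection a‖ ^ 2 :=
  real_inner_self_eq_norm_sq _

theorem residualKernel_self_ne_zero (U : Submodule ℝ E) [U.HasOrthogonalProjection] {a : E}
    (ha : a ∉ U) : residualKernel U a a ≠ 0 := by
  rw [residualKernel_self, starProjection_orthogonal_val]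
  exact pow_ne_zero 2 (norm_ne_zero_iff.mpr (sub_ne_zero.mpr fun h =>
    ha (starProjection_eq_self_iff.mp h.symm)))

theorem residualKernel_sup_span_singleton (U : Submodule ℝ E) [U.HasOrthogonalProjection] (w : E)
    [(U ⊔ ℝ ∙ w).HasOrthogonalProjection] (a b : E) :
    residualKernel (U ⊔ ℝ ∙ w) a b = residualKernel U a b
      - residualKernel U a w * residualKernel U w b / residualKernel U w w := by
  simp only [residualKernel, starProjection_orthogonal_sup_span_singleton]
  rw [real_inner_self_eq_norm_sq]
  rcases eq_or_ne (Uᗮ.starProjection w) 0 with h | h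
  · simp [h]
  · have hw : ‖Uᗮ.starProjection w‖ ≠ 0 := norm_ne_zero_iff.mpr h
    simp only [inner_sub_left, inner_sub_right, real_inner_smul_left, real_inner_smul_right,
      real_inner_self_eq_norm_sq]
    field_simp
    rw [real_inner_comm (Uᗮ.starProjection a)]
    ring

theorem iInf_norm_sub_sum_smul_sub_smul {ι : Type*} [Fintype ι] (u : ι → E) (w v : E) :
    ⨅ p : (ι → ℝ) × ℝ, ‖v - ∑ i, p.1 i • u i - p.2 • w‖
      = ‖(span ℝ (range u) ⊔ ℝ ∙ w)ᗮ.starProjection v‖ := by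
  let combination : (ι → ℝ) × ℝ → ↥(span ℝ (range u) ⊔ ℝ ∙ w) := fun p =>
    ⟨∑ i, p.1 i • u i + p.2 • w,
      add_mem (mem_sup_left (sum_mem fun i _ => smul_mem _ _ (subset_span (mem_range_self i))))
        (mem_sup_right (smul_mem _ _ (mem_span_singleton_self w)))⟩
  have hsurj : Function.Surjective combination := by
    rintro ⟨y, hy⟩
    obtain ⟨a, ha, b, hb, rfl⟩ := mem_sup.mp hy
    obtain ⟨c, rfl⟩ := (mem_span_range_iff_exists_fun ℝ).mp ha
    obtain ⟨t, rfl⟩ := mem_span_singleton.mp hb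
    exact ⟨(c, t), rfl⟩
  rw [starProjection_orthogonal_val, starProjection_minimal, ← hsurj.iInf_comp]
  simp only [combination, sub_sub]

theorem sum_range_residualKernel_sq_div (f : ℕ → E) (v : E) (m : ℕ) :
    ∑ k ∈ Finset.range m, residualKernel (span ℝ (range fun i : Fin k => f i)) v (f k) ^ 2
        / residualKernel (span ℝ (range fun i : Fin k => f i)) (f k) (f k)
      = ⟪v, v⟫ - residualKernel (span ℝ (range fun i : Fin m => f i)) v v := by
  induction m with
  | zero => simp [residualKernel_bot]
  | succ m ih =>
    simp only [Finset.sum_range_succ, ih, span_range_fin_succ f, residualKernel_sup_span_singleton,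
      residualKernel_comm _ (f m) v]
    ring

theorem eq_residualKernel_of_recursion {Ω : Type*} (Φ : Ω → E) (x : ℕ → Ω)
    (Kj : ℕ → Ω → Ω → ℝ)
    (hli : ∀ m, LinearIndependent ℝ fun i : Fin m => Φ (x (i + 1)))
    (hK1 : ∀ a b, Kj 1 a b = ⟪Φ a, Φ b⟫)
    (hrec : ∀ m : ℕ, 1 ≤ m → Kj m (x m) (x m) ≠ 0 → ∀ a b : Ω,
      Kj (m + 1) a b = Kj m a b - Kj m a (x m) * Kj m (x m) b / Kj m (x m) (x m))
    (m : ℕ) (a b : Ω) :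
    Kj (m + 1) a b
      = residualKernel (span ℝ (range fun i : Fin m => Φ (x (i + 1)))) (Φ a) (Φ b) := by
  induction m generalizing a b with
  | zero => simp [hK1, residualKernel_bot]
  | succ m ih =>
    have hne : Kj (m + 1) (x (m + 1)) (x (m + 1)) ≠ 0 := by
      rw [ih]
      exact residualKernel_self_ne_zero _
        (notMem_span_range_fin (f := fun k => Φ (x (k + 1))) hli m)
    simp only [hrec (m + 1) (Nat.le_add_left 1 m) hne, ih,
      span_range_fin_succ (fun k => Φ (x (k + 1))), residualKernel_sup_span_singleton]

end

/-- Greedy optimality of one step: with points `x_1,…,x_j` already chosen,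
adding a candidate `y` gives the squared Power Function
`P²(z) = K(z,z) − Σ_{k=1}^j N_k(z)² − K_{j+1}(z,y)²/K_{j+1}(y,y)`;
hence maximizing `K_{j+1}(z,y)²/K_{j+1}(y,y)` among candidates minimizes the
resulting Power Function at `z`. -/
theorem greedy_step_optimality
    {H : Type*} [NormedAddCommGroup H] [InnerProductSpace ℝ H] [CompleteSpace H]
    {Ω : Type*} (K : Ω → Ω → ℝ) (Φ : Ω → H)
    (hker : ∀ a b : Ω, K a b = ⟪Φ a, Φ b⟫)
    (hSPD : ∀ (m : ℕ) (y : Fin m → Ω), Function.Injective y →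
      (Matrix.of fun i k : Fin m => K (y i) (y k)).PosDef)
    (x : ℕ → Ω) (hdist : Function.Injective x)
    (Kj : ℕ → Ω → Ω → ℝ) (N : ℕ → Ω → ℝ)
    (hK1 : ∀ a b : Ω, Kj 1 a b = K a b)
    (hrec : ∀ m : ℕ, 1 ≤ m → Kj m (x m) (x m) ≠ 0 → ∀ a b : Ω,
      Kj (m + 1) a b
        = Kj m a b - Kj m a (x m) * Kj m (x m) b / Kj m (x m) (x m))
    (hN : ∀ m : ℕ, 1 ≤ m → ∀ a : Ω,
      N m a = Kj m a (x m) / Real.sqrt (Kj m (x m) (x m)))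
    (j : ℕ) (z : Ω)
    (P : Ω → ℝ)
    (hP : ∀ y : Ω,
      P y = ⨅ p : (Fin j → ℝ) × ℝ,
        ‖InnerProductSpace.toDual ℝ H (Φ z)
          - ∑ i, p.1 i • InnerProductSpace.toDual ℝ H (Φ (x ((i : ℕ) + 1)))
          - p.2 • InnerProductSpace.toDual ℝ H (Φ y)‖) :
    (∀ y : Ω, 0 < Kj (j + 1) y y →
      P y ^ 2 = K z z - (∑ k ∈ Finset.Icc 1 j, N k z ^ 2)
        - Kj (j + 1) z y ^ 2 / Kj (j + 1) y y) ∧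
    (∀ y y' : Ω, 0 < Kj (j + 1) y y → 0 < Kj (j + 1) y' y' →
      Kj (j + 1) z y' ^ 2 / Kj (j + 1) y' y'
        ≤ Kj (j + 1) z y ^ 2 / Kj (j + 1) y y →
      P y ≤ P y') := by
  set f : ℕ → H := fun k => Φ (x (k + 1))
  have hli (m : ℕ) : LinearIndependent ℝ fun i : Fin m => f i :=
    Matrix.linearIndependent_of_posDef_gram <| by
      simpa [Matrix.gram, hker] using hSPD m (fun i => x (i + 1))
        (hdist.comp ((add_left_injective 1).comp Fin.val_injective))
  have hKj :=
    eq_residualKernel_of_recursion Φ x Kj hli (fun a b => (hK1 a b).trans (hker a b)) hrec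
  have hNsum : ∑ k ∈ Finset.Icc 1 j, N k z ^ 2
      = K z z - residualKernel (span ℝ (range fun i : Fin j => f i)) (Φ z) (Φ z) := by
    rw [Finset.sum_Icc_one_eq_sum_range, hker, ← sum_range_residualKernel_sq_div f]
    refine Finset.sum_congr rfl fun k _ => ?_
    rw [hN (k + 1) (Nat.le_add_left 1 k), div_pow,
      Real.sq_sqrt (by rw [hKj, residualKernel_self]; positivity), hKj, hKj]
  have hP_eq (y : Ω) :
      P y = ‖(span ℝ (range fun i : Fin j => f i) ⊔ ℝ ∙ Φ y)ᗮ.starProjection (Φ z)‖ := by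
    simp only [hP, ← map_smul, ← map_sum, ← map_sub, LinearIsometryEquiv.norm_map]
    exact iInf_norm_sub_sum_smul_sub_smul _ _ _
  have hP_sq (y : Ω) : P y ^ 2
      = K z z - (∑ k ∈ Finset.Icc 1 j, N k z ^ 2) - Kj (j + 1) z y ^ 2 / Kj (j + 1) y y := by
    rw [hP_eq, ← residualKernel_self, residualKernel_sup_span_singleton, hNsum, hKj, hKj,
      residualKernel_comm _ (Φ y)]
    ring
  refine ⟨fun y _ => hP_sq y, fun y y' _ _ hle => ?_⟩
  have hP_nonneg (y : Ω) : 0 ≤ P y := hP_eq y ▸ norm_nonneg _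
  rw [← pow_le_pow_iff_left₀ (hP_nonneg y) (hP_nonneg y') two_ne_zero, hP_sq, hP_sq]
  linarith
end
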